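/- arXiv:1309.5564 — 2 statements merged into one kernel-verified Lean document; each statement's English description precedes it below -/
import Mathlib

section
/- Let (X_i) be a positive-recurrent discrete Markov chain, A a finite subset of the state space, τ_A = min{i ≥ 1 : X_i ∈ A}, and T_n = #{1 ≤ i ≤ n : X_i ∈ A}. For x ∈ A, define K_x(u,v) = ∑_{n≥0} E_x(u^{T_n}) v^n and H_{x,y}(v) = E_x(v^{τ_A}; X_{τ_A} = y) for x, y ∈ A. Then with I the identity matrix indexed by A, H(v) = (H_{x,y}(v)), K(u,v) = (K_x(u,v)) a column vector, and 1 the all-ones column vector: (I - u H(v)) K(u,v) = (1/(1-v)) (1 - H(v) 1), for 0 < u, v < 1. -/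
noncomputable section

variable {σ : Type*}

/-- Trajectory of a chain started at `x` with subsequent states given by `path`. -/
def traj (x : σ) {n : ℕ} (path : Fin n → σ) : ℕ → σ :=
  fun i => if h : i - 1 < n ∧ i ≠ 0 then path ⟨i - 1, h.1⟩ else x

open Classical in
/-- Probability, for the Markov chain with one-step transition probabilities `P`
started at `x`, of an event `pred` on trajectories, computed over horizon `n`
(the event should only depend on times `≤ n`). -/
def chainProb (P : σ → σ → ℝ) (x : σ) (n : ℕ) (pred : (ℕ → σ) → Prop) : ℝ :=
  ∑' path : Fin n → σ,
    if pred (traj x path) then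
      ∏ k : Fin n, P (traj x path (k : ℕ)) (traj x path ((k : ℕ) + 1))
    else 0

/-- The chain is positive recurrent at `x`: return to `x` is a.s. and has finite mean. -/
def PosRecurrentAt (P : σ → σ → ℝ) (x : σ) : Prop :=
  (∑' j : ℕ, chainProb P x j
      (fun X => 1 ≤ j ∧ X j = x ∧ ∀ i, 1 ≤ i → i < j → X i ≠ x)) = 1 ∧
  Summable (fun j : ℕ => (j : ℝ) * chainProb P x j
      (fun X => 1 ≤ j ∧ X j = x ∧ ∀ i, 1 ≤ i → i < j → X i ≠ x))

open Classical in
/-- `P_x{T_n = k}` where `T_n` is the sojourn time of the chain in `A` up to time `n`. -/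
def sojournProb (P : σ → σ → ℝ) (A : Finset σ) (x : σ) (n k : ℕ) : ℝ :=
  chainProb P x n (fun X => ((Finset.Icc 1 n).filter (fun i => X i ∈ A)).card = k)

/-- Matrix of generating functions `H_{x,y}(v) = E_x(v^{τ_A}; X_{τ_A} = y)`, `x, y ∈ A`. -/
def Hmat (P : σ → σ → ℝ) (A : Finset σ) (v : ℝ) : Matrix ↥A ↥A ℝ :=
  fun x y => ∑' j : ℕ,
    chainProb P (x : σ) j
      (fun X => 1 ≤ j ∧ X j = (y : σ) ∧ ∀ i, 1 ≤ i → i < j → (X i) ∉ A) * v^j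

/-- Vector of generating functions `K_x(u,v) = ∑_n E_x(u^{T_n}) v^n`, `x ∈ A`. -/
def Kvec (P : σ → σ → ℝ) (A : Finset σ) (u v : ℝ) : ↥A → ℝ :=
  fun x => ∑' n : ℕ,
    (∑ k ∈ Finset.range (n + 1), sojournProb P A (x : σ) n k * u^k) * v^n

/-- Matrix of generating functions `G_{x,y}(v) = ∑_i P_x{X_i = y} v^i`, `x, y ∈ A`. -/
def Gmat (P : σ → σ → ℝ) (A : Finset σ) (v : ℝ) : Matrix ↥A ↥A ℝ :=
  fun x y => ∑' i : ℕ, chainProb P (x : σ) i (fun X => X i = (y : σ)) * v^i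

end


noncomputable section
namespace Renewal
open ENNReal Finset
open scoped Classical

variable {σ : Type*}

def cpW (P : σ → σ → ℝ) (x : σ) (n : ℕ) (f : (ℕ → σ) → ℝ≥0∞) : ℝ≥0∞ :=
  ∑' path : Fin n → σ,
    (∏ k : Fin n, ENNReal.ofReal (P (traj x path (k : ℕ)) (traj x path ((k : ℕ) + 1)))) *
      f (traj x path)

lemma cpW_congr {P : σ → σ → ℝ} {x : σ} {n : ℕ} {f g : (ℕ → σ) → ℝ≥0∞}
    (h : ∀ X, f X = g X) : cpW P x n f = cpW P x n g := by
  have : f = g := funext h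
  rw [this]

@[simp] lemma cpW_zero (P : σ → σ → ℝ) (x : σ) (n : ℕ) :
    cpW P x n (fun _ => 0) = 0 := by simp [cpW]

lemma cpW_add (P : σ → σ → ℝ) (x : σ) (n : ℕ) (f g : (ℕ → σ) → ℝ≥0∞) :
    cpW P x n (fun X => f X + g X) = cpW P x n f + cpW P x n g := by
  simp only [cpW, mul_add]
  exact ENNReal.tsum_add

lemma cpW_sum {ι : Type*} (P : σ → σ → ℝ) (x : σ) (n : ℕ) (s : Finset ι)
    (f : ι → (ℕ → σ) → ℝ≥0∞) :
    cpW P x n (fun X => ∑ i ∈ s, f i X) = ∑ i ∈ s, cpW P x n (f i) := by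
  simp only [cpW, Finset.mul_sum]
  exact Summable.tsum_finsetSum (fun i _ => ENNReal.summable)

lemma cpW_const_mul (P : σ → σ → ℝ) (x : σ) (n : ℕ) (c : ℝ≥0∞) (f : (ℕ → σ) → ℝ≥0∞) :
    cpW P x n (fun X => c * f X) = c * cpW P x n f := by
  simp only [cpW, ← ENNReal.tsum_mul_left, mul_left_comm]

lemma cpW_mul_const (P : σ → σ → ℝ) (x : σ) (n : ℕ) (c : ℝ≥0∞) (f : (ℕ → σ) → ℝ≥0∞) :
    cpW P x n (fun X => f X * c) = cpW P x n f * c := by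
  simp only [cpW, ← ENNReal.tsum_mul_right, mul_assoc]

lemma cpW_mono (P : σ → σ → ℝ) (x : σ) (n : ℕ) {f g : (ℕ → σ) → ℝ≥0∞}
    (h : ∀ X, f X ≤ g X) : cpW P x n f ≤ cpW P x n g :=
  ENNReal.tsum_le_tsum fun _ => mul_le_mul_right (h _) _

def pieceEquiv (σ : Type*) (j m : ℕ) : ((Fin j → σ) × (Fin m → σ)) ≃ (Fin (j + m) → σ) where
  toFun pq k := if h : (k : ℕ) < j then pq.1 ⟨k, h⟩ else pq.2 ⟨(k : ℕ) - j, by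
    have := k.isLt; omega⟩
  invFun X := (fun i => X ⟨i, by omega⟩, fun i => X ⟨j + i, by omega⟩)
  left_inv := by
    rintro ⟨p, q⟩
    ext i
    · simp
    · have h : ¬ ((j + (i : ℕ)) < j) := by omega
      simp [h]
  right_inv := by
    intro X
    funext k
    dsimp only
    split
    · rfl
    · congr 1
      ext
      simp
      omega

lemma traj_piece_left {j m : ℕ} (x : σ) (p : Fin j → σ) (q : Fin m → σ) :
    ∀ i, i ≤ j → traj x (pieceEquiv σ j m (p, q)) i = traj x p i := by
  intro i hi
  rcases Nat.eq_zero_or_pos i with rfl | h0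
  · simp [traj]
  · have h1 : i - 1 < j := by omega
    have h2 : i - 1 < j + m := by omega
    have hne : i ≠ 0 := by omega
    simp [traj, pieceEquiv, h1, h2, hne]

lemma traj_piece_right {j m : ℕ} (x : σ) (p : Fin j → σ) (q : Fin m → σ) :
    ∀ i, i ≤ m →
      traj x (pieceEquiv σ j m (p, q)) (j + i) = traj (traj x p j) q i := by
  intro i hi
  rcases Nat.eq_zero_or_pos i with rfl | h0
  · have : traj (traj x p j) q 0 = traj x p j := by simp [traj]
    rw [this, Nat.add_zero]
    exact traj_piece_left x p q j le_rfl
  · have h1 : ¬ (j + i - 1 < j) := by omega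
    have h2 : j + i - 1 < j + m := by omega
    have hne : j + i ≠ 0 := by omega
    have h3 : i - 1 < m := by omega
    have h4 : i ≠ 0 := by omega
    simp only [traj, pieceEquiv, Equiv.coe_fn_mk, dif_pos (And.intro h2 hne),
      dif_pos (And.intro h3 h4), dif_neg h1]
    congr 1
    ext
    simp
    omega

lemma W_piece (P : σ → σ → ℝ) {j m : ℕ} (x : σ) (p : Fin j → σ) (q : Fin m → σ) :
    (∏ k : Fin (j + m), ENNReal.ofReal
        (P (traj x (pieceEquiv σ j m (p, q)) (k : ℕ))
           (traj x (pieceEquiv σ j m (p, q)) ((k : ℕ) + 1)))) =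
    (∏ k : Fin j, ENNReal.ofReal (P (traj x p (k : ℕ)) (traj x p ((k : ℕ) + 1)))) *
    (∏ k : Fin m, ENNReal.ofReal
        (P (traj (traj x p j) q (k : ℕ)) (traj (traj x p j) q ((k : ℕ) + 1)))) := by
  rw [Fin.prod_univ_add]
  congr 1
  · refine Finset.prod_congr rfl fun k _ => ?_
    rw [Fin.coe_castAdd]
    rw [traj_piece_left x p q (k : ℕ) (le_of_lt k.isLt),
        traj_piece_left x p q ((k : ℕ) + 1) k.isLt]
  · refine Finset.prod_congr rfl fun k _ => ?_
    rw [Fin.coe_natAdd]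
    rw [traj_piece_right x p q (k : ℕ) (le_of_lt k.isLt), add_assoc,
        traj_piece_right x p q ((k : ℕ) + 1) k.isLt]


lemma cpW_split (P : σ → σ → ℝ) (x : σ) (j m : ℕ)
    (f1 f2 : (ℕ → σ) → ℝ≥0∞)
    (h1 : ∀ X X' : ℕ → σ, (∀ i, i ≤ j → X i = X' i) → f1 X = f1 X')
    (h2 : ∀ X X' : ℕ → σ, (∀ i, i ≤ m → X i = X' i) → f2 X = f2 X') :
    cpW P x (j + m) (fun X => f1 X * f2 (fun i => X (j + i))) =
      ∑' y : σ, cpW P x j (fun X => if X j = y then f1 X else 0) * cpW P y m f2 := by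
  rw [cpW, ← (pieceEquiv σ j m).tsum_eq, ENNReal.tsum_prod']
  have key : ∀ (p : Fin j → σ) (q : Fin m → σ),
      (∏ k : Fin (j + m), ENNReal.ofReal
          (P (traj x (pieceEquiv σ j m (p, q)) (k : ℕ))
             (traj x (pieceEquiv σ j m (p, q)) ((k : ℕ) + 1)))) *
        (f1 (traj x (pieceEquiv σ j m (p, q))) *
          f2 (fun i => traj x (pieceEquiv σ j m (p, q)) (j + i))) =
      ((∏ k : Fin j, ENNReal.ofReal (P (traj x p (k : ℕ)) (traj x p ((k : ℕ) + 1)))) *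
          f1 (traj x p)) *
        ((∏ k : Fin m, ENNReal.ofReal
            (P (traj (traj x p j) q (k : ℕ)) (traj (traj x p j) q ((k : ℕ) + 1)))) *
          f2 (traj (traj x p j) q)) := by
    intro p q
    rw [W_piece P x p q,
        h1 _ _ (fun i hi => traj_piece_left x p q i hi),
        h2 (fun i => traj x (pieceEquiv σ j m (p, q)) (j + i)) (traj (traj x p j) q)
          (fun i hi => traj_piece_right x p q i hi)]
    ring
  calc
    ∑' (p : Fin j → σ) (q : Fin m → σ),
        (∏ k : Fin (j + m), ENNReal.ofReal
            (P (traj x (pieceEquiv σ j m (p, q)) (k : ℕ))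
               (traj x (pieceEquiv σ j m (p, q)) ((k : ℕ) + 1)))) *
          (f1 (traj x (pieceEquiv σ j m (p, q))) *
            f2 (fun i => traj x (pieceEquiv σ j m (p, q)) (j + i)))
      = ∑' (p : Fin j → σ),
          ((∏ k : Fin j, ENNReal.ofReal (P (traj x p (k : ℕ)) (traj x p ((k : ℕ) + 1)))) *
            f1 (traj x p)) * cpW P (traj x p j) m f2 := by
          refine tsum_congr fun p => ?_
          rw [tsum_congr fun q => key p q, ENNReal.tsum_mul_left, cpW]
    _ = ∑' y : σ, cpW P x j (fun X => if X j = y then f1 X else 0) * cpW P y m f2 := by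
          rw [eq_comm]
          simp only [cpW, ← ENNReal.tsum_mul_right]
          rw [ENNReal.tsum_comm]
          refine tsum_congr fun p => ?_
          rw [tsum_eq_single (traj x p j) ?_]
          · rw [if_pos rfl]
          · intro y hy
            rw [if_neg (fun h => hy h.symm), mul_zero, zero_mul]

lemma ofReal_tsum_P (P : σ → σ → ℝ) (hP : ∀ x y, 0 ≤ P x y) (hs : ∀ x, ∑' y, P x y = 1)
    (x : σ) : ∑' y : σ, ENNReal.ofReal (P x y) = 1 := by
  have h := hs x
  have hsm : Summable (P x) := by
    by_contra hns
    rw [tsum_eq_zero_of_not_summable hns] at h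
    norm_num at h
  rw [← ENNReal.ofReal_tsum_of_nonneg (hP x) hsm, h, ENNReal.ofReal_one]

lemma cpW_one_step (P : σ → σ → ℝ) (hone : ∀ x, ∑' y : σ, ENNReal.ofReal (P x y) = 1)
    (y : σ) : cpW P y 1 (fun _ => (1:ℝ≥0∞)) = 1 := by
  have e : cpW P y 1 (fun _ => (1:ℝ≥0∞)) = ∑' z : σ, ENNReal.ofReal (P y z) := by
    rw [cpW, ← (Equiv.funUnique (Fin 1) σ).symm.tsum_eq]
    refine tsum_congr fun z => ?_
    simp [traj, Fin.prod_univ_one, Equiv.funUnique]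
  rw [e, hone y]

lemma cpW_total (P : σ → σ → ℝ) (hone : ∀ x, ∑' y : σ, ENNReal.ofReal (P x y) = 1) :
    ∀ (n : ℕ) (x : σ), cpW P x n (fun _ => (1:ℝ≥0∞)) = 1 := by
  intro n
  induction n with
  | zero =>
    intro x
    rw [cpW, tsum_eq_single (fun i : Fin 0 => x)
      (fun b hb => absurd (Subsingleton.elim b _) hb)]
    simp
  | succ n ih =>
    intro x
    have e1 : cpW P x (n+1) (fun _ => (1:ℝ≥0∞)) =
        cpW P x (n+1) (fun X => (fun _ => (1:ℝ≥0∞)) X *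
          (fun _ => (1:ℝ≥0∞)) (fun i => X (n+i))) := cpW_congr fun X => by simp
    rw [e1, cpW_split P x n 1 (fun _ => (1:ℝ≥0∞)) (fun _ => (1:ℝ≥0∞)) (fun _ _ _ => rfl) (fun _ _ _ => rfl),
      tsum_congr fun y => by rw [cpW_one_step P hone y, mul_one]]
    simp only [cpW]
    rw [ENNReal.tsum_comm]
    have h2 : ∀ p : Fin n → σ,
        (∑' (y : σ), (∏ k : Fin n, ENNReal.ofReal (P (traj x p (k:ℕ)) (traj x p ((k:ℕ) + 1)))) *
          if traj x p n = y then (1:ℝ≥0∞) else 0)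
        = (∏ k : Fin n, ENNReal.ofReal (P (traj x p (k:ℕ)) (traj x p ((k:ℕ) + 1)))) * 1 := by
      intro p
      rw [tsum_eq_single (traj x p n) (fun y hy => by rw [if_neg (fun h => hy h.symm), mul_zero]),
        if_pos rfl]
    rw [tsum_congr h2]
    exact ih x

lemma cpW_le_one (P : σ → σ → ℝ) (hone : ∀ x, ∑' y : σ, ENNReal.ofReal (P x y) = 1)
    {x : σ} {n : ℕ} {f : (ℕ → σ) → ℝ≥0∞} (hf : ∀ X, f X ≤ 1) : cpW P x n f ≤ 1 :=
  (cpW_mono P x n hf).trans_eq (cpW_total P hone n x)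

lemma chainProb_eq (P : σ → σ → ℝ) (hP : ∀ x y, 0 ≤ P x y) (x : σ) (n : ℕ)
    (pred : (ℕ → σ) → Prop) :
    chainProb P x n pred = (cpW P x n (fun X => if pred X then 1 else 0)).toReal := by
  rw [cpW, ENNReal.tsum_toReal_eq ?fin]
  case fin =>
    intro p
    refine ENNReal.mul_ne_top ?_ (by split <;> simp)
    exact (ENNReal.prod_lt_top (fun k _ => ENNReal.ofReal_lt_top)).ne
  rw [chainProb]
  refine tsum_congr fun p => ?_
  by_cases h : pred (traj x p)
  · rw [if_pos h, if_pos h, mul_one, ENNReal.toReal_prod]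
    exact Finset.prod_congr rfl fun k _ => (ENNReal.toReal_ofReal (hP _ _)).symm
  · rw [if_neg h, if_neg h, mul_zero]; simp

def gE (P : σ → σ → ℝ) (A : Finset σ) (w : ℝ≥0∞) (x : σ) (n : ℕ) : ℝ≥0∞ :=
  cpW P x n (fun X => w ^ (((Finset.Icc 1 n).filter (fun i => X i ∈ A)).card))

def hAE (P : σ → σ → ℝ) (A : Finset σ) (x y : σ) (j : ℕ) : ℝ≥0∞ :=
  cpW P x j (fun X => if (1 ≤ j ∧ X j = y ∧ ∀ i, 1 ≤ i → i < j → X i ∉ A)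
    then (1:ℝ≥0∞) else 0)

def nvE (P : σ → σ → ℝ) (A : Finset σ) (x : σ) (n : ℕ) : ℝ≥0∞ :=
  cpW P x n (fun X => if (∀ i, 1 ≤ i → i ≤ n → X i ∉ A) then (1:ℝ≥0∞) else 0)

lemma hAE_zero (P : σ → σ → ℝ) (A : Finset σ) (x y : σ) : hAE P A x y 0 = 0 := by
  rw [hAE, cpW_congr (g := fun _ => 0) (fun X => by
    rw [if_neg]; rintro ⟨h, -⟩; omega), cpW_zero]

lemma card_first_visit (A : Finset σ) (X : ℕ → σ) {j n : ℕ}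
    (hj : 1 ≤ j) (hjn : j ≤ n) (hXA : X j ∈ A)
    (hmin : ∀ i, 1 ≤ i → i < j → X i ∉ A) :
    ((Finset.Icc 1 n).filter (fun i => X i ∈ A)).card
      = 1 + ((Finset.Icc 1 (n - j)).filter (fun i => X (j + i) ∈ A)).card := by
  rw [Finset.card_filter, Finset.card_filter, (id (Finset.Icc_add_one_left_eq_Ioc 0 n) : Finset.Icc 1 n = Finset.Ioc 0 n),
    (id (Finset.Icc_add_one_left_eq_Ioc 0 (n - j)) :
      Finset.Icc 1 (n - j) = Finset.Ioc 0 (n - j)),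
    ← Finset.sum_Ioc_consecutive (fun i => if X i ∈ A then 1 else 0) (Nat.zero_le j) hjn]
  congr 1
  · rw [Finset.sum_eq_single_of_mem j (Finset.mem_Ioc.2 ⟨by omega, le_rfl⟩)
      (fun i hi hne => by
        rw [Finset.mem_Ioc] at hi
        exact if_neg (hmin i (by omega) (by omega)))]
    exact if_pos hXA
  · have hmap : Finset.Ioc j n = Finset.map (addLeftEmbedding j) (Finset.Ioc 0 (n - j)) := by
      rw [Finset.map_add_left_Ioc]
      congr 1 <;> omega
    rw [hmap, Finset.sum_map]
    refine Finset.sum_congr rfl fun i hi => ?_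
    simp [addLeftEmbedding_apply]

lemma pointwise (A : Finset σ) (w : ℝ≥0∞) (n : ℕ) (X : ℕ → σ) :
    w ^ (((Finset.Icc 1 n).filter (fun i => X i ∈ A)).card)
      = (if (∀ i, 1 ≤ i → i ≤ n → X i ∉ A) then (1:ℝ≥0∞) else 0)
        + ∑ j ∈ Finset.Icc 1 n, ∑ y ∈ A,
            (if (X j = y ∧ ∀ i, 1 ≤ i → i < j → X i ∉ A) then (1:ℝ≥0∞) else 0)
              * (w * w ^ (((Finset.Icc 1 (n - j)).filter (fun i => X (j + i) ∈ A)).card)) := by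
  by_cases hnv : ∀ i, 1 ≤ i → i ≤ n → X i ∉ A
  · have hfl : (Finset.Icc 1 n).filter (fun i => X i ∈ A) = ∅ := by
      rw [Finset.filter_eq_empty_iff]
      intro i hi
      rw [Finset.mem_Icc] at hi
      exact hnv i hi.1 hi.2
    rw [hfl, if_pos hnv, Finset.sum_eq_zero (fun j hj => Finset.sum_eq_zero fun y hy => by
      rw [Finset.mem_Icc] at hj
      rw [if_neg, zero_mul]
      rintro ⟨hXy, -⟩
      exact hnv j hj.1 hj.2 (hXy ▸ hy))]
    simp
  · rw [if_neg hnv]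
    push_neg at hnv
    have hex : ∃ i, 1 ≤ i ∧ i ≤ n ∧ X i ∈ A := hnv
    obtain ⟨hj1, hjn, hjA⟩ := Nat.find_spec hex
    set j0 := Nat.find hex
    have hmin : ∀ i, 1 ≤ i → i < j0 → X i ∉ A := fun i h1 h2 hA =>
      Nat.find_min hex h2 ⟨h1, by omega, hA⟩
    have houter : (∑ j ∈ Finset.Icc 1 n, ∑ y ∈ A,
        (if (X j = y ∧ ∀ i, 1 ≤ i → i < j → X i ∉ A) then (1:ℝ≥0∞) else 0)
          * (w * w ^ (((Finset.Icc 1 (n - j)).filter (fun i => X (j + i) ∈ A)).card)))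
        = ∑ y ∈ A,
        (if (X j0 = y ∧ ∀ i, 1 ≤ i → i < j0 → X i ∉ A) then (1:ℝ≥0∞) else 0)
          * (w * w ^ (((Finset.Icc 1 (n - j0)).filter (fun i => X (j0 + i) ∈ A)).card)) := by
      refine Finset.sum_eq_single_of_mem j0 (Finset.mem_Icc.2 ⟨hj1, hjn⟩) ?_
      intro j hj hne
      refine Finset.sum_eq_zero fun y hy => ?_
      rw [Finset.mem_Icc] at hj
      rcases lt_or_gt_of_ne hne with hlt | hgt
      · rw [if_neg, zero_mul]
        rintro ⟨hXy, -⟩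
        exact hmin j hj.1 hlt (hXy ▸ hy)
      · rw [if_neg, zero_mul]
        rintro ⟨-, hmn⟩
        exact hmn j0 hj1 hgt hjA
    have hinner : (∑ y ∈ A,
        (if (X j0 = y ∧ ∀ i, 1 ≤ i → i < j0 → X i ∉ A) then (1:ℝ≥0∞) else 0)
          * (w * w ^ (((Finset.Icc 1 (n - j0)).filter (fun i => X (j0 + i) ∈ A)).card)))
        = w * w ^ (((Finset.Icc 1 (n - j0)).filter (fun i => X (j0 + i) ∈ A)).card) := by
      rw [Finset.sum_eq_single_of_mem (X j0) hjA (fun y hy hne => by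
        rw [if_neg, zero_mul]
        rintro ⟨h, -⟩
        exact hne h.symm), if_pos ⟨rfl, hmin⟩, one_mul]
    rw [houter, hinner, zero_add, card_first_visit A X hj1 hjn hjA hmin, pow_add, pow_one]

lemma cpW_ite_ne (P : σ → σ → ℝ) (x : σ) (j n : ℕ) {z y : σ} (hz : z ≠ y)
    (C : (ℕ → σ) → Prop) :
    cpW P x n (fun X => if X j = z then (if (X j = y ∧ C X) then (1:ℝ≥0∞) else 0) else 0)
      = 0 := by
  rw [cpW_congr (g := fun _ => 0) ?_, cpW_zero]
  intro X
  by_cases hXz : X j = z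
  · rw [if_pos hXz, if_neg]
    rintro ⟨h1, -⟩
    exact hz (hXz.symm.trans h1)
  · rw [if_neg hXz]

lemma term_eq (P : σ → σ → ℝ) (A : Finset σ) (w : ℝ≥0∞) (x : σ) {j n : ℕ}
    (hj : 1 ≤ j) (hjn : j ≤ n) (y : σ) :
    cpW P x n (fun X =>
        (if (X j = y ∧ ∀ i, 1 ≤ i → i < j → X i ∉ A) then (1:ℝ≥0∞) else 0)
          * (w * w ^ (((Finset.Icc 1 (n - j)).filter (fun i => X (j + i) ∈ A)).card)))
      = hAE P A x y j * (w * gE P A w y (n - j)) := by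
  obtain ⟨m, rfl⟩ : ∃ m, n = j + m := ⟨n - j, by omega⟩
  have hm : j + m - j = m := by omega
  rw [hm]
  have hsplit := cpW_split P x j m
    (fun X => if (X j = y ∧ ∀ i, 1 ≤ i → i < j → X i ∉ A) then (1:ℝ≥0∞) else 0)
    (fun X => w * w ^ (((Finset.Icc 1 m).filter (fun i => X i ∈ A)).card))
    (by
      intro X X' hag
      have hcond : (X j = y ∧ ∀ i, 1 ≤ i → i < j → X i ∉ A)
          ↔ (X' j = y ∧ ∀ i, 1 ≤ i → i < j → X' i ∉ A) := by
        rw [hag j le_rfl]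
        constructor
        · rintro ⟨h1, h2⟩
          exact ⟨h1, fun i hi1 hi2 => by rw [← hag i hi2.le]; exact h2 i hi1 hi2⟩
        · rintro ⟨h1, h2⟩
          exact ⟨h1, fun i hi1 hi2 => by rw [hag i hi2.le]; exact h2 i hi1 hi2⟩
      simp only [hcond]
      congr)
    (by
      intro X X' hag
      have h : (Finset.Icc 1 m).filter (fun i => X i ∈ A)
          = (Finset.Icc 1 m).filter (fun i => X' i ∈ A) := by
        refine Finset.filter_congr fun i hi => ?_
        rw [hag i (Finset.mem_Icc.1 hi).2]
      rw [h])
  rw [hsplit]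
  rw [tsum_eq_single y
    (fun z hz => by rw [cpW_ite_ne P x j j hz _, zero_mul])]
  congr 1
  · rw [hAE]
    refine cpW_congr fun X => ?_
    by_cases hXy : X j = y
    · by_cases hC : ∀ i, 1 ≤ i → i < j → X i ∉ A
      · rw [if_pos hXy, if_pos ⟨hXy, hC⟩, if_pos ⟨hj, hXy, hC⟩]
      · rw [if_pos hXy, if_neg (fun h => hC h.2), if_neg (fun h => hC h.2.2)]
    · rw [if_neg hXy, if_neg (fun h => hXy h.2.1)]
  · rw [gE, ← cpW_const_mul]

lemma gE_rec (P : σ → σ → ℝ) (A : Finset σ) (w : ℝ≥0∞) (x : σ) (n : ℕ) :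
    gE P A w x n = nvE P A x n
      + ∑ j ∈ Finset.Icc 1 n, ∑ y ∈ A, hAE P A x y j * (w * gE P A w y (n - j)) := by
  rw [gE, cpW_congr (pointwise A w n), cpW_add, cpW_sum]
  congr 1
  refine Finset.sum_congr rfl fun j hj => ?_
  rw [cpW_sum]
  refine Finset.sum_congr rfl fun y hy => ?_
  rw [Finset.mem_Icc] at hj
  exact term_eq P A w x hj.1 hj.2 y

lemma tsum_shift (b : ℕ → ℝ≥0∞) (j : ℕ) :
    ∑' n : ℕ, (if j ≤ n then b (n - j) else 0) = ∑' m : ℕ, b m := by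
  have hinj : Function.Injective (fun m : ℕ => j + m) := fun a b h => by simpa using h
  rw [← Function.Injective.tsum_eq hinj
      (f := fun n => if j ≤ n then b (n - j) else 0) ?_]
  · refine tsum_congr fun m => ?_
    rw [if_pos (by omega : j ≤ j + m)]
    congr 1
    omega
  · intro n hn
    rcases le_or_gt j n with h | h
    · exact ⟨n - j, by simp; omega⟩
    · exact absurd (if_neg (not_le.2 h)) hn

lemma cauchy (a b : ℕ → ℝ≥0∞) (ha0 : a 0 = 0) :
    ∑' n : ℕ, ∑ j ∈ Finset.Icc 1 n, a j * b (n - j)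
      = (∑' j : ℕ, a j) * (∑' m : ℕ, b m) := by
  have h1 : ∀ n : ℕ, ∑ j ∈ Finset.Icc 1 n, a j * b (n - j)
      = ∑' j : ℕ, (if j ∈ Finset.Icc 1 n then a j * b (n - j) else 0) := by
    intro n
    rw [tsum_eq_sum (s := Finset.Icc 1 n) (fun j hj => if_neg hj)]
    exact (Finset.sum_congr rfl fun j hj => (if_pos hj).symm)
  rw [tsum_congr h1, ENNReal.tsum_comm]
  have h2 : ∀ j : ℕ, (∑' n : ℕ, if j ∈ Finset.Icc 1 n then a j * b (n - j) else 0)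
      = a j * ∑' m, b m := by
    intro j
    rcases Nat.eq_zero_or_pos j with rfl | hj
    · simp [ha0, Finset.mem_Icc]
    · have e : ∀ n : ℕ, (if j ∈ Finset.Icc 1 n then a j * b (n - j) else 0)
          = a j * (if j ≤ n then b (n - j) else 0) := by
        intro n
        by_cases h : j ∈ Finset.Icc 1 n
        · rw [if_pos h, if_pos (Finset.mem_Icc.1 h).2]
        · rw [if_neg h, if_neg (fun hc => h (Finset.mem_Icc.2 ⟨hj, hc⟩)), mul_zero]
      rw [tsum_congr e, ENNReal.tsum_mul_left, tsum_shift]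
  rw [tsum_congr h2, ENNReal.tsum_mul_right]

def KEf (P : σ → σ → ℝ) (A : Finset σ) (w vb : ℝ≥0∞) (x : σ) : ℝ≥0∞ :=
  ∑' n : ℕ, gE P A w x n * vb ^ n

def NEf (P : σ → σ → ℝ) (A : Finset σ) (vb : ℝ≥0∞) (x : σ) : ℝ≥0∞ :=
  ∑' n : ℕ, nvE P A x n * vb ^ n

def HEf (P : σ → σ → ℝ) (A : Finset σ) (vb : ℝ≥0∞) (x y : σ) : ℝ≥0∞ :=
  ∑' j : ℕ, hAE P A x y j * vb ^ j

lemma E1 (P : σ → σ → ℝ) (A : Finset σ) (w vb : ℝ≥0∞) (x : σ) :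
    KEf P A w vb x
      = NEf P A vb x + ∑ y ∈ A, HEf P A vb x y * (w * KEf P A w vb y) := by
  rw [KEf]
  have h1 : ∀ n : ℕ, gE P A w x n * vb ^ n
      = nvE P A x n * vb ^ n
        + ∑ y ∈ A, ∑ j ∈ Finset.Icc 1 n,
            (hAE P A x y j * vb ^ j) * (w * (gE P A w y (n - j) * vb ^ (n - j))) := by
    intro n
    rw [gE_rec P A w x n, add_mul]
    congr 1
    calc (∑ j ∈ Finset.Icc 1 n, ∑ y ∈ A, hAE P A x y j * (w * gE P A w y (n - j))) * vb ^ n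
        = ∑ j ∈ Finset.Icc 1 n, ∑ y ∈ A,
            hAE P A x y j * (w * gE P A w y (n - j)) * vb ^ n := by
          rw [Finset.sum_mul]
          exact Finset.sum_congr rfl fun j _ => Finset.sum_mul _ _ _
      _ = ∑ y ∈ A, ∑ j ∈ Finset.Icc 1 n,
            hAE P A x y j * (w * gE P A w y (n - j)) * vb ^ n := Finset.sum_comm
      _ = ∑ y ∈ A, ∑ j ∈ Finset.Icc 1 n,
            (hAE P A x y j * vb ^ j) * (w * (gE P A w y (n - j) * vb ^ (n - j))) := by
          refine Finset.sum_congr rfl fun y _ => Finset.sum_congr rfl fun j hj => ?_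
          rw [Finset.mem_Icc] at hj
          have hv : vb ^ n = vb ^ j * vb ^ (n - j) := by
            rw [← pow_add]
            congr 1
            omega
          rw [hv]
          ring
  rw [tsum_congr h1, ENNReal.tsum_add]
  congr 1
  rw [Summable.tsum_finsetSum (fun y _ => ENNReal.summable)]
  refine Finset.sum_congr rfl fun y _ => ?_
  rw [cauchy (fun j => hAE P A x y j * vb ^ j)
      (fun m => w * (gE P A w y m * vb ^ m)) (by simp [hAE_zero]),
    ENNReal.tsum_mul_left, HEf, KEf]

lemma gE_le_one (P : σ → σ → ℝ) (hone : ∀ x, ∑' y : σ, ENNReal.ofReal (P x y) = 1)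
    (A : Finset σ) {w : ℝ≥0∞} (hw : w ≤ 1) (x : σ) (n : ℕ) : gE P A w x n ≤ 1 :=
  cpW_le_one P hone (fun _ => pow_le_one' hw _)

lemma nvE_le_one (P : σ → σ → ℝ) (hone : ∀ x, ∑' y : σ, ENNReal.ofReal (P x y) = 1)
    (A : Finset σ) (x : σ) (n : ℕ) : nvE P A x n ≤ 1 :=
  cpW_le_one P hone (fun _ => by split <;> simp)

lemma hAE_le_one (P : σ → σ → ℝ) (hone : ∀ x, ∑' y : σ, ENNReal.ofReal (P x y) = 1)
    (A : Finset σ) (x y : σ) (j : ℕ) : hAE P A x y j ≤ 1 :=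
  cpW_le_one P hone (fun _ => by split <;> simp)

lemma KEf_le (P : σ → σ → ℝ) (hone : ∀ x, ∑' y : σ, ENNReal.ofReal (P x y) = 1)
    (A : Finset σ) {w : ℝ≥0∞} (hw : w ≤ 1) (vb : ℝ≥0∞) (x : σ) :
    KEf P A w vb x ≤ (1 - vb)⁻¹ := by
  rw [← ENNReal.tsum_geometric]
  exact ENNReal.tsum_le_tsum fun n =>
    (mul_le_mul_left (gE_le_one P hone A hw x n) _).trans_eq (one_mul _)

lemma NEf_le (P : σ → σ → ℝ) (hone : ∀ x, ∑' y : σ, ENNReal.ofReal (P x y) = 1)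
    (A : Finset σ) (vb : ℝ≥0∞) (x : σ) : NEf P A vb x ≤ (1 - vb)⁻¹ := by
  rw [← ENNReal.tsum_geometric]
  exact ENNReal.tsum_le_tsum fun n =>
    (mul_le_mul_left (nvE_le_one P hone A x n) _).trans_eq (one_mul _)

lemma HEf_le (P : σ → σ → ℝ) (hone : ∀ x, ∑' y : σ, ENNReal.ofReal (P x y) = 1)
    (A : Finset σ) (vb : ℝ≥0∞) (x y : σ) : HEf P A vb x y ≤ (1 - vb)⁻¹ := by
  rw [← ENNReal.tsum_geometric]
  exact ENNReal.tsum_le_tsum fun n =>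
    (mul_le_mul_left (hAE_le_one P hone A x y n) _).trans_eq (one_mul _)

lemma KEf_one (P : σ → σ → ℝ) (hone : ∀ x, ∑' y : σ, ENNReal.ofReal (P x y) = 1)
    (A : Finset σ) (vb : ℝ≥0∞) (x : σ) : KEf P A 1 vb x = (1 - vb)⁻¹ := by
  rw [KEf, ← ENNReal.tsum_geometric]
  refine tsum_congr fun n => ?_
  rw [gE, cpW_congr (g := fun _ => 1) (fun X => one_pow _), cpW_total P hone, one_mul]

lemma Hmat_eq (P : σ → σ → ℝ) (hP : ∀ x y, 0 ≤ P x y)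
    (hone : ∀ x, ∑' y : σ, ENNReal.ofReal (P x y) = 1)
    (A : Finset σ) {v : ℝ} (hv0 : 0 ≤ v) (x y : ↥A) :
    Hmat P A v x y = (HEf P A (ENNReal.ofReal v) (x : σ) (y : σ)).toReal := by
  rw [Hmat, HEf, ENNReal.tsum_toReal_eq (fun j =>
    ENNReal.mul_ne_top (ne_top_of_le_ne_top ENNReal.one_ne_top (hAE_le_one P hone A _ _ j))
      (ENNReal.pow_ne_top ENNReal.ofReal_ne_top))]
  refine tsum_congr fun j => ?_
  rw [ENNReal.toReal_mul, ENNReal.toReal_pow, ENNReal.toReal_ofReal hv0]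
  congr 1
  rw [hAE, chainProb_eq P hP (x : σ) j
    (fun X => 1 ≤ j ∧ X j = (y : σ) ∧ ∀ i, 1 ≤ i → i < j → X i ∉ A)]
  congr 1
  refine cpW_congr fun X => ?_
  congr

lemma inner_sum_eq (P : σ → σ → ℝ) (hP : ∀ x y, 0 ≤ P x y)
    (hone : ∀ x, ∑' y : σ, ENNReal.ofReal (P x y) = 1)
    (A : Finset σ) {u : ℝ} (hu0 : 0 ≤ u) (x : σ) (n : ℕ) :
    ∑ k ∈ Finset.range (n + 1), sojournProb P A x n k * u ^ k
      = (gE P A (ENNReal.ofReal u) x n).toReal := by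
  have hg : gE P A (ENNReal.ofReal u) x n
      = ∑ k ∈ Finset.range (n + 1),
          cpW P x n (fun X =>
            if ((Finset.Icc 1 n).filter (fun i => X i ∈ A)).card = k
            then (1:ℝ≥0∞) else 0) * (ENNReal.ofReal u) ^ k := by
    calc gE P A (ENNReal.ofReal u) x n
        = cpW P x n (fun X => ∑ k ∈ Finset.range (n + 1),
            (if ((Finset.Icc 1 n).filter (fun i => X i ∈ A)).card = k
              then (1:ℝ≥0∞) else 0) * (ENNReal.ofReal u) ^ k) := by
          rw [gE]
          refine cpW_congr fun X => ?_
          have hcard : ((Finset.Icc 1 n).filter (fun i => X i ∈ A)).card < n + 1 := by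
            have h1 := Finset.card_filter_le (Finset.Icc 1 n) (fun i => X i ∈ A)
            have h2 : (Finset.Icc 1 n).card = n := by rw [Nat.card_Icc]; omega
            omega
          rw [Finset.sum_eq_single_of_mem _ (Finset.mem_range.2 hcard)
            (fun k _ hne => by rw [if_neg (fun h => hne h.symm), zero_mul]),
            if_pos rfl, one_mul]
      _ = _ := by
          rw [cpW_sum]
          exact Finset.sum_congr rfl fun k _ => cpW_mul_const _ _ _ _ _
  rw [hg, ENNReal.toReal_sum (fun k _ =>
    ENNReal.mul_ne_top (ne_top_of_le_ne_top ENNReal.one_ne_top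
        (cpW_le_one P hone (fun X => by split <;> simp)))
      (ENNReal.pow_ne_top ENNReal.ofReal_ne_top))]
  refine Finset.sum_congr rfl fun k _ => ?_
  rw [ENNReal.toReal_mul, ENNReal.toReal_pow, ENNReal.toReal_ofReal hu0]
  congr 1
  rw [sojournProb, chainProb_eq P hP x n
    (fun X => ((Finset.Icc 1 n).filter (fun i => X i ∈ A)).card = k)]
  congr 1
  refine cpW_congr fun X => ?_
  congr

lemma Kvec_eq (P : σ → σ → ℝ) (hP : ∀ x y, 0 ≤ P x y)
    (hone : ∀ x, ∑' y : σ, ENNReal.ofReal (P x y) = 1)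
    (A : Finset σ) {u v : ℝ} (hu0 : 0 ≤ u) (hu1 : u ≤ 1) (hv0 : 0 ≤ v) (x : ↥A) :
    Kvec P A u v x
      = (KEf P A (ENNReal.ofReal u) (ENNReal.ofReal v) (x : σ)).toReal := by
  rw [Kvec, KEf, ENNReal.tsum_toReal_eq (fun n =>
    ENNReal.mul_ne_top (ne_top_of_le_ne_top ENNReal.one_ne_top
        (gE_le_one P hone A (ENNReal.ofReal_le_one.2 hu1) _ n))
      (ENNReal.pow_ne_top ENNReal.ofReal_ne_top))]
  refine tsum_congr fun n => ?_
  rw [ENNReal.toReal_mul, ENNReal.toReal_pow, ENNReal.toReal_ofReal hv0,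
    inner_sum_eq P hP hone A hu0 (x : σ) n]

end Renewal
end

open scoped ENNReal in
open Classical in
/-- Matrix renewal equation for the sojourn-time generating function of a
positive-recurrent Markov chain in a finite set `A`:
`(I - u H(v)) K(u,v) = (1/(1-v)) (1 - H(v) 1)`. -/
theorem stmt17 {σ : Type*} (P : σ → σ → ℝ)
    (hP : ∀ x y, 0 ≤ P x y) (hsum : ∀ x, ∑' y, P x y = 1)
    (hrec : ∀ x, PosRecurrentAt P x)
    (A : Finset σ) (u v : ℝ) (hu : u ∈ Set.Ioo (0:ℝ) 1) (hv : v ∈ Set.Ioo (0:ℝ) 1) :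
    ((1 : Matrix ↥A ↥A ℝ) - u • Hmat P A v).mulVec (Kvec P A u v) =
      (1/(1-v)) • (fun x : ↥A => 1 - ∑ y : ↥A, Hmat P A v x y) := by
  obtain ⟨hu0, hu1⟩ := hu
  obtain ⟨hv0, hv1⟩ := hv
  have hone : ∀ x, ∑' y : σ, ENNReal.ofReal (P x y) = 1 :=
    Renewal.ofReal_tsum_P P hP hsum
  set ub := ENNReal.ofReal u with hub
  set vb := ENNReal.ofReal v with hvb
  have hvb1 : vb < 1 := ENNReal.ofReal_lt_one.2 hv1
  have hub1 : ub ≤ 1 := ENNReal.ofReal_le_one.2 hu1.le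
  have hGne : ((1:ℝ≥0∞) - vb)⁻¹ ≠ ⊤ := ENNReal.inv_ne_top.2 (tsub_pos_of_lt hvb1).ne'
  have hKne : ∀ y : σ, Renewal.KEf P A ub vb y ≠ ⊤ := fun y =>
    ne_top_of_le_ne_top hGne (Renewal.KEf_le P hone A hub1 vb y)
  have hNne : ∀ y : σ, Renewal.NEf P A vb y ≠ ⊤ := fun y =>
    ne_top_of_le_ne_top hGne (Renewal.NEf_le P hone A vb y)
  have hHne : ∀ x y : σ, Renewal.HEf P A vb x y ≠ ⊤ := fun x y =>
    ne_top_of_le_ne_top hGne (Renewal.HEf_le P hone A vb x y)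
  -- real abbreviations
  set kk : σ → ℝ := fun y => (Renewal.KEf P A ub vb y).toReal with hkk
  set nn : σ → ℝ := fun y => (Renewal.NEf P A vb y).toReal with hnn
  set hh : σ → σ → ℝ := fun x y => (Renewal.HEf P A vb x y).toReal with hhh
  set G : ℝ := (((1:ℝ≥0∞) - vb)⁻¹).toReal with hG
  -- real form of the renewal equation (w = u)
  have hE1 : ∀ x : σ, kk x = nn x + ∑ y ∈ A, hh x y * (u * kk y) := by
    intro x
    have h := Renewal.E1 P A ub vb x
    have hterm : ∀ y ∈ A, Renewal.HEf P A vb x y * (ub * Renewal.KEf P A ub vb y) ≠ ⊤ :=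
      fun y _ => ENNReal.mul_ne_top (hHne x y)
        (ENNReal.mul_ne_top ENNReal.ofReal_ne_top (hKne y))
    calc kk x = (Renewal.NEf P A vb x
        + ∑ y ∈ A, Renewal.HEf P A vb x y * (ub * Renewal.KEf P A ub vb y)).toReal := by
          rw [hkk]; exact congrArg ENNReal.toReal h
      _ = nn x + ∑ y ∈ A, hh x y * (u * kk y) := by
          rw [ENNReal.toReal_add (hNne x) (ENNReal.sum_ne_top.2 hterm),
            ENNReal.toReal_sum hterm]
          congr 1
          refine Finset.sum_congr rfl fun y _ => ?_
          rw [ENNReal.toReal_mul, ENNReal.toReal_mul, hub, ENNReal.toReal_ofReal hu0.le]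
  -- real form with w = 1
  have hE2 : ∀ x : σ, G = nn x + ∑ y ∈ A, hh x y * G := by
    intro x
    have h := Renewal.E1 P A 1 vb x
    simp only [Renewal.KEf_one P hone A vb, one_mul] at h
    have hterm : ∀ y ∈ A, Renewal.HEf P A vb x y * ((1:ℝ≥0∞) - vb)⁻¹ ≠ ⊤ :=
      fun y _ => ENNReal.mul_ne_top (hHne x y) hGne
    calc G = (Renewal.NEf P A vb x
        + ∑ y ∈ A, Renewal.HEf P A vb x y * ((1:ℝ≥0∞) - vb)⁻¹).toReal := by
          rw [hG]; exact congrArg ENNReal.toReal h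
      _ = nn x + ∑ y ∈ A, hh x y * G := by
          rw [ENNReal.toReal_add (hNne x) (ENNReal.sum_ne_top.2 hterm),
            ENNReal.toReal_sum hterm]
          congr 1
          exact Finset.sum_congr rfl fun y _ => ENNReal.toReal_mul
  have hGval : G = 1/(1-v) := by
    rw [hG, hvb, show ((1:ℝ≥0∞) - ENNReal.ofReal v) = ENNReal.ofReal (1-v) by
        rw [ENNReal.ofReal_sub 1 hv0.le, ENNReal.ofReal_one],
      ENNReal.toReal_inv, ENNReal.toReal_ofReal (by linarith), one_div]
  funext x
  simp only [Matrix.sub_mulVec, Matrix.smul_mulVec, Matrix.one_mulVec, Pi.sub_apply,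
    Pi.smul_apply, smul_eq_mul]
  simp only [Matrix.mulVec, dotProduct]
  simp only [Renewal.Hmat_eq P hP hone A hv0.le,
    Renewal.Kvec_eq P hP hone A hu0.le hu1.le hv0.le, ← hub, ← hvb]
  have hs1 : ∑ y : ↥A, (Renewal.HEf P A vb (x : σ) (y : σ)).toReal *
      (Renewal.KEf P A ub vb (y : σ)).toReal = ∑ y ∈ A, hh (x:σ) y * kk y :=
    Finset.sum_coe_sort A (fun y => hh (x:σ) y * kk y)
  have hs2 : ∑ y : ↥A, (Renewal.HEf P A vb (x : σ) (y : σ)).toReal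
      = ∑ y ∈ A, hh (x:σ) y :=
    Finset.sum_coe_sort A (fun y => hh (x:σ) y)
  have hkx : (Renewal.KEf P A ub vb (x:σ)).toReal = kk (x:σ) := rfl
  rw [hs1, hs2, hkx, ← hGval]
  have e2 := hE1 (x : σ)
  have e3 := hE2 (x : σ)
  have e1 : ∑ y ∈ A, hh (x:σ) y * (u * kk y) = u * ∑ y ∈ A, hh (x:σ) y * kk y := by
    rw [Finset.mul_sum]
    exact Finset.sum_congr rfl fun y _ => by ring
  rw [e1] at e2
  have e4 : (∑ y ∈ A, hh (x:σ) y * G) = (∑ y ∈ A, hh (x:σ) y) * G :=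
    (Finset.sum_mul _ _ _).symm
  rw [e4] at e3
  linear_combination e2 - e3
end

section
/- In the setting of the previous matrix equation, its solution satisfies K(u,v) = (1/(1-v)) [(1-u) G(v) + u I]^{-1} 1, where G(v) = (G_{x,y}(v))_{x,y∈A} is the matrix of generating functions G_{x,y}(v) = ∑_{i≥0} P_x{X_i = y} v^i, provided H(v) = I - G(v)^{-1} and the relevant matrices are invertible for 0 < u, v < 1. -/
open Classical in
/-- Solution of the matrix renewal equation: if `(I - u H(v)) K(u,v) = (1/(1-v))(1 - H(v)1)`,
`H(v) = I - G(v)⁻¹`, and the relevant matrices are invertible, then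
`K(u,v) = (1/(1-v)) ((1-u) G(v) + u I)⁻¹ 1`. -/
theorem stmt18 {σ : Type*} (P : σ → σ → ℝ)
    (hP : ∀ x y, 0 ≤ P x y) (hsum : ∀ x, ∑' y, P x y = 1)
    (hrec : ∀ x, PosRecurrentAt P x)
    (A : Finset σ) (u v : ℝ) (hu : u ∈ Set.Ioo (0:ℝ) 1) (hv : v ∈ Set.Ioo (0:ℝ) 1)
    (heq : ((1 : Matrix ↥A ↥A ℝ) - u • Hmat P A v).mulVec (Kvec P A u v) =
      (1/(1-v)) • (fun x : ↥A => 1 - ∑ y : ↥A, Hmat P A v x y))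
    (hH : Hmat P A v = 1 - (Gmat P A v)⁻¹)
    (hG : IsUnit (Gmat P A v).det)
    (hM : IsUnit ((1-u) • Gmat P A v + u • (1 : Matrix ↥A ↥A ℝ)).det) :
    Kvec P A u v =
      (1/(1-v)) • ((1-u) • Gmat P A v + u • (1 : Matrix ↥A ↥A ℝ))⁻¹.mulVec
        (fun _ : ↥A => 1) := by

  set G := Gmat P A v with hGdef
  set M := (1-u) • G + u • (1 : Matrix ↥A ↥A ℝ) with hMdef
  set K := Kvec P A u v with hKdef
  set c : ℝ := 1/(1-v)
  haveI : Invertible M := M.invertibleOfIsUnitDet hM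
  have hGM : G * G⁻¹ = 1 := Matrix.mul_nonsing_inv G hG
  have hMG : ((1 : Matrix ↥A ↥A ℝ) - u • Hmat P A v) = M * G⁻¹ := by
    rw [hH, hMdef]
    rw [add_mul, Matrix.smul_mul, Matrix.smul_mul, hGM, one_mul, smul_sub]
    simp [sub_smul, one_smul]
    abel
  have hrhs : (fun x : ↥A => 1 - ∑ y : ↥A, Hmat P A v x y) =
      G⁻¹.mulVec (fun _ => 1) := by
    funext x
    rw [hH]
    simp [Matrix.mulVec, dotProduct, Matrix.sub_apply, Finset.sum_sub_distrib,
      Matrix.one_apply]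
  rw [hMG, hrhs] at heq
  have hcomm : G * M = M * G := by
    rw [hMdef]
    simp [mul_add, add_mul, Matrix.mul_smul, Matrix.smul_mul]
  have hcomm' : G * M⁻¹ = M⁻¹ * G := by
    have h := Commute.invOf_right (b := M) hcomm
    rwa [Matrix.invOf_eq_nonsing_inv] at h
  have step1 : M.mulVec (G⁻¹.mulVec K) = c • G⁻¹.mulVec (fun _ => 1) := by
    rw [Matrix.mulVec_mulVec]; exact heq
  have step2 : G⁻¹.mulVec K = c • (M⁻¹ * G⁻¹).mulVec (fun _ => 1) := by
    have := congrArg (fun w => M⁻¹.mulVec w) step1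
    simpa [Matrix.mulVec_mulVec, ← mul_assoc, Matrix.nonsing_inv_mul M hM,
      Matrix.mulVec_smul] using this
  have step3 : K = c • (G * (M⁻¹ * G⁻¹)).mulVec (fun _ => 1) := by
    have := congrArg (fun w => G.mulVec w) step2
    simpa [Matrix.mulVec_mulVec, ← mul_assoc, hGM, Matrix.mulVec_smul] using this
  rw [step3]
  congr 1
  rw [← mul_assoc, hcomm', mul_assoc, hGM, mul_one]
end
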